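/- Every 3-colorable graph is word-representable; specifically, given a proper 3-coloring with color classes C1, C2, C3, orienting every edge from the lower-indexed class to the higher-indexed class yields a semi-transitive orientation. -/

import Mathlib

variable {V : Type*}

/-- Letters `x` and `y` alternate in the word `W`: the subword induced by the two
letters has no two equal consecutive letters. -/
def Alternate [DecidableEq V] (W : List V) (x y : V) : Prop :=
  (W.filter (fun z => z = x ∨ z = y)).Chain' (· ≠ ·)

/-- A word is `k`-uniform if every letter of the alphabet occurs exactly `k` times. -/
def Uniform [DecidableEq V] (W : List V) (k : ℕ) : Prop :=
  ∀ x : V, W.count x = k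

/-- A word `W` represents the graph `G`: every vertex occurs in `W` and two distinct
vertices are adjacent iff they alternate in `W`. -/
def Represents [DecidableEq V] (W : List V) (G : SimpleGraph V) : Prop :=
  (∀ x : V, x ∈ W) ∧ ∀ x y : V, x ≠ y → (G.Adj x y ↔ Alternate W x y)

def WordRepresentable [DecidableEq V] (G : SimpleGraph V) : Prop :=
  ∃ W : List V, Represents W G

def KWordRepresentable [DecidableEq V] (G : SimpleGraph V) (k : ℕ) : Prop :=
  ∃ W : List V, Uniform W k ∧ Represents W G

/-- A digraph (relation) is acyclic if it has no directed cycle. -/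
def Acyclic (E : V → V → Prop) : Prop :=
  ∀ x : V, ¬ Relation.TransGen E x x

/-- A digraph is semi-transitive if it is acyclic and for every directed path
`v 0 → v 1 → ⋯ → v k` such that the arc `v 0 → v k` is present, all arcs
`v i → v j` for `i < j` are present. -/
def SemiTransitive (E : V → V → Prop) : Prop :=
  Acyclic E ∧ ∀ (k : ℕ) (v : Fin (k + 1) → V),
    (∀ i : Fin k, E (v i.castSucc) (v i.succ)) →
    E (v 0) (v (Fin.last k)) →
    ∀ i j : Fin (k + 1), i < j → E (v i) (v j)

/-- `E` is an orientation of the graph `G`. -/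
def IsOrientation (G : SimpleGraph V) (E : V → V → Prop) : Prop :=
  ∀ x y : V, G.Adj x y ↔ (E x y ∨ E y x)

/-- The word `W` covers the set `A` of non-edges of the digraph `E` orienting `G`:
`W` is `k`-uniform for some `k`; its initial permutation is a topological sort of `E`
(first occurrences respect reachability); `G` is a subgraph of the graph represented
by `W`; and every pair in `A` is a non-edge of the graph represented by `W`. -/
def Covers [DecidableEq V] (W : List V) (G : SimpleGraph V) (E : V → V → Prop)
    (A : Set (V × V)) : Prop :=
  (∃ k : ℕ, Uniform W k) ∧
  (∀ u v : V, Relation.TransGen E u v → W.idxOf u < W.idxOf v) ∧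
  (∀ x y : V, G.Adj x y → Alternate W x y) ∧
  ∀ p ∈ A, ¬ Alternate W p.1 p.2

/-- `G` is representable by a concatenation of `k` permutations of its vertex set. -/
def PermutationallyRepresentable [DecidableEq V] (G : SimpleGraph V) (k : ℕ) : Prop :=
  ∃ Ps : List (List V), Ps.length = k ∧
    (∀ P ∈ Ps, P.Nodup ∧ ∀ x : V, x ∈ P) ∧
    Represents Ps.flatten G

/-!
Write `A₀, A₁, A₂` for the colour classes. Along a directed path of the upward orientation the
colour strictly increases, so a path has at most two arcs, and the only pair of vertices of a
two-arc path that is not an arc of it is the shortcut itself: the orientation is semi-transitive.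

The representing word is a concatenation of blocks, and `x, y` alternate in it iff the blocks
restricted to `{x, y}` concatenate to an alternating word. With `N v` the neighbourhood of `v` and
`A₂<c`, `A₂>c` the vertices of `A₂` of rank below and above `c`, the blocks are
* `A₂>c (A₀∖N c) c (A₀∩N c) (A₁∩N c) c (A₁∖N c) A₂<c` for each `c ∈ A₂`, by increasing rank,
* `(A₀∩N b) b (A₀∖N b) (A₁∖{b}) A₂` for each `b ∈ A₁`,
* `A₀ A₁ A₂` and `A₀ʳ A₁ʳ A₂`.
For `x ∈ A₀` and `y ∈ A₁` every block restricts to `xy`, except that the block of `y` restricts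
to `yx` when `xy` is not an edge. For `c ∈ A₂` and a neighbour `v ∉ A₂`, the blocks restrict to
`cv` before the block of `c`, to `cvc` in it and to `vc` after it; for a non-neighbour `v` the
block of `c` contains `cc`. Two vertices of `A₀`, or of `A₁`, appear in opposite orders in the
last two blocks.
-/

namespace List

variable {α : Type*}

theorem isChain_ne_cons_flatten_replicate {x y : α} (hxy : x ≠ y) (n : ℕ) :
    IsChain (· ≠ ·) (x :: (replicate n [y, x]).flatten) := by
  induction n with
  | zero => exact isChain_singleton x
  | succ n ih =>
    simp only [replicate_succ, flatten_cons, cons_append, nil_append]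
    exact isChain_cons_cons.2 ⟨hxy, isChain_cons_cons.2 ⟨hxy.symm, ih⟩⟩

theorem flatten_replicate_append_cons_replicate (x y : α) (s t : ℕ) :
    (replicate s [x, y] ++ [x, y, x] :: replicate t [y, x]).flatten =
      x :: (replicate (s + 1 + t) [y, x]).flatten := by
  induction s with
  | zero => simp [Nat.add_comm 1 t, replicate_succ]
  | succ s ih =>
    rw [replicate_succ, cons_append, flatten_cons, ih, show s + 1 + 1 + t = s + 1 + t + 1 by omega,
      replicate_succ]
    rfl

theorem isChain_ne_flatten_replicate {x y : α} (hxy : x ≠ y) (n : ℕ) :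
    IsChain (· ≠ ·) (replicate n [x, y]).flatten := by
  have h := isChain_ne_cons_flatten_replicate hxy (n + 1 + 0)
  rw [← flatten_replicate_append_cons_replicate x y n 0] at h
  exact h.infix ⟨[], [x, y, x], by simp⟩

theorem eq_of_isChain_ne_flatten {x y : α} {L : List (List α)}
    (hL : ∀ l ∈ L, l = [x, y] ∨ l = [y, x]) (h : IsChain (· ≠ ·) L.flatten) :
    ∀ l ∈ L, ∀ l' ∈ L, l = l' := by
  induction L with
  | nil => simp
  | cons a L ih =>
    have ih' := ih (fun l hl => hL l (mem_cons_of_mem a hl))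
      (h.infix ⟨a, [], by simp⟩)
    suffices ∀ l ∈ L, l = a by
      have ha : ∀ m ∈ a :: L, m = a := by simpa using this
      exact fun l hl l' hl' => (ha l hl).trans (ha l' hl').symm
    cases L with
    | nil => simp
    | cons b L =>
      have hab : a = b := by
        have hchain : IsChain (· ≠ ·) (a ++ b) := h.infix ⟨[], L.flatten, by simp⟩
        rcases hL a (by simp) with rfl | rfl <;> rcases hL b (by simp) with rfl | rfl <;>
          simp_all [isChain_cons_cons]
      intro l hl
      rw [ih' l hl b mem_cons_self, hab]

theorem not_isChain_ne_append_append_reverse {P L : List α} (hL : L ≠ []) :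
    ¬ IsChain (· ≠ ·) (P ++ L ++ L.reverse) := by
  obtain ⟨M, e, rfl⟩ := (eq_nil_or_concat L).resolve_left hL
  intro h
  have : IsChain (· ≠ ·) [e, e] := h.infix ⟨P ++ M, M.reverse, by simp⟩
  simp at this

theorem exists_map_eq_replicate_append_cons_replicate {β γ : Type*} [Preorder γ]
    {rank : α → γ} {l : List α} (hl : l.Pairwise (rank · < rank ·)) {x : α} (hx : x ∈ l)
    {f : α → β} {a b : β} (ha : ∀ d ∈ l, rank d < rank x → f d = a)
    (hb : ∀ d ∈ l, rank x < rank d → f d = b) :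
    ∃ s t, l.map f = replicate s a ++ f x :: replicate t b := by
  obtain ⟨s, t, rfl⟩ := append_of_mem hx
  obtain ⟨-, hxt, hsxt⟩ := pairwise_append.1 hl
  refine ⟨s.length, t.length, ?_⟩
  rw [map_append, map_cons, map_eq_replicate_iff.2, map_eq_replicate_iff.2]
  · exact fun d hd => hb d (by simp [hd]) ((pairwise_cons.1 hxt).1 d hd)
  · exact fun d hd => ha d (by simp [hd]) (hsxt d hd x mem_cons_self)

end List

theorem Finset.toList_filter_pair {α : Type*} [DecidableEq α] (s : Finset α) {x y : α}
    (hy : y ∉ s) : s.toList.filter (fun z => z = x ∨ z = y) = if x ∈ s then [x] else [] := by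
  split_ifs with hx
  · rw [← List.perm_singleton, List.perm_ext_iff_of_nodup ((Finset.nodup_toList s).filter _)
      (List.nodup_singleton x)]
    intro z
    simp only [List.mem_filter, Finset.mem_toList, decide_eq_true_eq, List.mem_singleton]
    constructor
    · rintro ⟨hz, rfl | rfl⟩
      exacts [rfl, absurd hz hy]
    · rintro rfl
      exact ⟨hx, Or.inl rfl⟩
  · rw [List.filter_eq_nil_iff]
    rintro z hz
    simp only [Finset.mem_toList] at hz
    simp only [decide_eq_true_eq, not_or]
    exact ⟨fun h => hx (h ▸ hz), fun h => hy (h ▸ hz)⟩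

theorem alternate_comm {V : Type*} [DecidableEq V] {W : List V} {x y : V} :
    Alternate W x y ↔ Alternate W y x := by
  simp only [Alternate, or_comm]

theorem semiTransitive_of_lt_grading {V : Type*} {E : V → V → Prop} (f : V → Fin 3)
    (hf : ∀ x y, E x y → f x < f y) : SemiTransitive E := by
  refine ⟨fun x hx => ?_, fun k v hpath hlong i j hij => ?_⟩
  · have := Relation.TransGen.lift (p := (· < ·)) f hf x x hx
    rw [Relation.transGen_eq_self] at this
    exact lt_irrefl _ this
  · have hmono : StrictMono (f ∘ v) := Fin.strictMono_iff_lt_succ.2 fun i => hf _ _ (hpath i)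
    have hk : k + 1 ≤ 3 := by simpa using Fintype.card_le_of_injective _ hmono.injective
    have hij' : (i : ℕ) < j := hij
    by_cases hji : (j : ℕ) = i + 1
    · convert hpath ⟨i, by omega⟩ using 2 <;> ext <;> simp [hji]
    -- the grading forces `k ≤ 2`, so the only pair that is not an arc of the path is the shortcut
    · obtain rfl : i = 0 := Fin.ext (by rw [Fin.val_zero]; omega)
      obtain rfl : j = Fin.last k := Fin.ext (by rw [Fin.val_last]; omega)
      exact hlong

theorem isOrientation_coloring {V α : Type*} [LinearOrder α] {G : SimpleGraph V}
    (C : G.Coloring α) : IsOrientation G (fun x y => G.Adj x y ∧ C x < C y) := by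
  intro x y
  constructor
  · intro h
    rcases lt_or_gt_of_ne (C.valid h) with hlt | hgt
    exacts [Or.inl ⟨h, hlt⟩, Or.inr ⟨h.symm, hgt⟩]
  · rintro (⟨h, -⟩ | ⟨h, -⟩)
    exacts [h, h.symm]

namespace ThreeColoring

variable {V : Type*} [Fintype V]

noncomputable def vertexList (p : V → Prop) [DecidablePred p] : List V :=
  (Finset.univ.filter p).toList

@[simp]
theorem mem_vertexList {p : V → Prop} [DecidablePred p] {v : V} : v ∈ vertexList p ↔ p v := by
  simp [vertexList]

noncomputable def rank (v : V) : Fin (Fintype.card V) := Fintype.equivFin V v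

section Restriction

variable [DecidableEq V]

-- Stated for the simp-normal form of `decide (z = x ∨ z = y)`, so that `simp` can use them.

@[simp]
theorem filter_vertexList_of_not_right {p : V → Prop} [DecidablePred p] {x y : V} (hy : ¬ p y) :
    (vertexList p).filter (fun z => decide (z = x) || decide (z = y)) =
      if p x then [x] else [] := by
  simpa [vertexList] using
    Finset.toList_filter_pair (Finset.univ.filter p) (x := x) (by simpa using hy)

@[simp]
theorem filter_vertexList_of_not_left {p : V → Prop} [DecidablePred p] {x y : V} (hx : ¬ p x) :
    (vertexList p).filter (fun z => decide (z = x) || decide (z = y)) =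
      if p y then [y] else [] := by
  simp only [Bool.or_comm (decide (_ = x))]
  exact filter_vertexList_of_not_right hx

end Restriction

variable {G : SimpleGraph V} (C : G.Coloring (Fin 3))

noncomputable def colorClass (k : Fin 3) : List V := vertexList (fun v => C v = k)

noncomputable def classBlock : List V := colorClass C 0 ++ colorClass C 1 ++ colorClass C 2

theorem mem_classBlock (v : V) : v ∈ classBlock C := by
  simp only [classBlock, colorClass, List.mem_append, mem_vertexList]
  omega

noncomputable def reversedClassBlock : List V :=
  (colorClass C 0).reverse ++ (colorClass C 1).reverse ++ colorClass C 2

noncomputable def colorTwoOrder : List V :=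
  ((List.finRange (Fintype.card V)).map (Fintype.equivFin V).symm).filter (fun v => C v = 2)

theorem mem_colorTwoOrder {v : V} : v ∈ colorTwoOrder C ↔ C v = 2 := by
  simpa [colorTwoOrder] using fun _ => ⟨Fintype.equivFin V v, by simp⟩

theorem pairwise_rank_colorTwoOrder : (colorTwoOrder C).Pairwise (rank · < rank ·) := by
  refine List.Pairwise.filter _ (List.pairwise_map.2 ?_)
  simpa [rank] using List.pairwise_lt_finRange (Fintype.card V)

section Word

variable [DecidableEq V] [DecidableRel G.Adj]

noncomputable def colorTwoBlock (d : V) : List V :=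
  vertexList (fun v => C v = 2 ∧ rank d < rank v) ++
    vertexList (fun v => C v = 0 ∧ ¬ G.Adj d v) ++ d :: vertexList (fun v => C v = 0 ∧ G.Adj d v) ++
    vertexList (fun v => C v = 1 ∧ G.Adj d v) ++ d :: vertexList (fun v => C v = 1 ∧ ¬ G.Adj d v) ++
    vertexList (fun v => C v = 2 ∧ rank v < rank d)

noncomputable def colorOneBlock (b : V) : List V :=
  vertexList (fun v => C v = 0 ∧ G.Adj b v) ++ b :: vertexList (fun v => C v = 0 ∧ ¬ G.Adj b v) ++
    vertexList (fun v => C v = 1 ∧ v ≠ b) ++ colorClass C 2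

noncomputable def blocks : List (List V) :=
  (colorTwoOrder C).map (colorTwoBlock C) ++ (colorClass C 1).map (colorOneBlock C) ++
    [classBlock C, reversedClassBlock C]

noncomputable def word : List V := (blocks C).flatten

end Word

variable [DecidableEq V] {C} {x y : V}

theorem filter_classBlock_of_lt (h : C x < C y) :
    (classBlock C).filter (fun z => z = x ∨ z = y) = [x, y] := by
  rcases (by omega : C x = 0 ∧ C y = 1 ∨ C x = 0 ∧ C y = 2 ∨ C x = 1 ∧ C y = 2) with
    ⟨hx, hy⟩ | ⟨hx, hy⟩ | ⟨hx, hy⟩ <;>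
  simp [classBlock, colorClass, *]

theorem filter_reversedClassBlock_of_lt (h : C x < C y) :
    (reversedClassBlock C).filter (fun z => z = x ∨ z = y) = [x, y] := by
  rcases (by omega : C x = 0 ∧ C y = 1 ∨ C x = 0 ∧ C y = 2 ∨ C x = 1 ∧ C y = 2) with
    ⟨hx, hy⟩ | ⟨hx, hy⟩ | ⟨hx, hy⟩ <;>
  simp [reversedClassBlock, colorClass, List.filter_reverse, *]

theorem filter_reversedClassBlock_of_eq (h : C x = C y) (hy : C y ≠ 2) :
    (reversedClassBlock C).filter (fun z => z = x ∨ z = y) =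
      ((classBlock C).filter (fun z => z = x ∨ z = y)).reverse := by
  rcases (by omega : C y = 0 ∨ C y = 1) with hy | hy <;>
  simp [classBlock, reversedClassBlock, colorClass, List.filter_reverse, *]

variable [DecidableRel G.Adj]

theorem filter_colorOneBlock_of_lt (h : C x < C y) {b : V} (hb : C b = 1) :
    (colorOneBlock C b).filter (fun z => z = x ∨ z = y) =
      if b = y ∧ ¬ G.Adj x y then [y, x] else [x, y] := by
  rcases (by omega : C x = 0 ∧ C y = 1 ∨ C x = 0 ∧ C y = 2 ∨ C x = 1 ∧ C y = 2) with
    ⟨hx, hy⟩ | ⟨hx, hy⟩ | ⟨hx, hy⟩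
  · have hbx : b ≠ x := by rintro rfl; simp_all
    by_cases hby : b = y
    · subst hby
      by_cases hadj : G.Adj x b <;>
        simp [colorOneBlock, colorClass, G.adj_comm b x, *]
    · by_cases hbx' : G.Adj b x <;> simp [colorOneBlock, colorClass, Ne.symm hby, *]
  · have hbx : b ≠ x := by rintro rfl; simp_all
    have hby : b ≠ y := by rintro rfl; simp_all
    by_cases hbx' : G.Adj b x <;> simp [colorOneBlock, colorClass, *]
  · have hby : b ≠ y := by rintro rfl; simp_all
    by_cases hbx : b = x
    · subst hbx; simp [colorOneBlock, colorClass, *]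
    · simp [colorOneBlock, colorClass, Ne.symm hbx, *]

theorem filter_colorTwoBlock_of_zero_one (hx : C x = 0) (hy : C y = 1) {d : V} (hd : C d = 2) :
    (colorTwoBlock C d).filter (fun z => z = x ∨ z = y) = [x, y] := by
  have hdx : d ≠ x := by rintro rfl; simp_all
  have hdy : d ≠ y := by rintro rfl; simp_all
  by_cases hdx' : G.Adj d x <;> by_cases hdy' : G.Adj d y <;>
    simp [colorTwoBlock, *]

theorem filter_colorTwoBlock_of_rank_lt (hx : C x ≠ 2) (hy : C y = 2) {d : V} (hd : C d = 2)
    (hdy : rank d < rank y) : (colorTwoBlock C d).filter (fun z => z = x ∨ z = y) = [y, x] := by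
  have hdx : d ≠ x := by rintro rfl; simp_all
  have hdy' : d ≠ y := by rintro rfl; simp at hdy
  by_cases hdx' : G.Adj d x <;> rcases (by omega : C x = 0 ∨ C x = 1) with hx | hx <;>
    simp [colorTwoBlock, hdy.not_gt, *]

theorem filter_colorTwoBlock_of_rank_gt (hx : C x ≠ 2) (hy : C y = 2) {d : V} (hd : C d = 2)
    (hdy : rank y < rank d) : (colorTwoBlock C d).filter (fun z => z = x ∨ z = y) = [x, y] := by
  have hdx : d ≠ x := by rintro rfl; simp_all
  have hdy' : d ≠ y := by rintro rfl; simp at hdy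
  by_cases hdx' : G.Adj d x <;> rcases (by omega : C x = 0 ∨ C x = 1) with hx | hx <;>
    simp [colorTwoBlock, hdy.not_gt, *]

theorem filter_colorTwoBlock_self (hx : C x ≠ 2) (hy : C y = 2) (hadj : G.Adj x y) :
    (colorTwoBlock C y).filter (fun z => z = x ∨ z = y) = [y, x, y] := by
  have hxy : x ≠ y := G.ne_of_adj hadj
  rcases (by omega : C x = 0 ∨ C x = 1) with hx | hx <;>
    simp [colorTwoBlock, G.adj_comm y x, *]

theorem infix_filter_colorTwoBlock_self (hnadj : ¬ G.Adj x y) :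
    [y, y] <:+: (colorTwoBlock C y).filter (fun z => z = x ∨ z = y) := by
  have hN : ∀ k, (vertexList (fun v => C v = k ∧ G.Adj y v)).filter
      (fun z => decide (z = x) || decide (z = y)) = [] := fun k => by
    rw [List.filter_eq_nil_iff]
    intro z hz
    simp only [mem_vertexList] at hz
    simp only [Bool.or_eq_true, decide_eq_true_eq, not_or]
    exact ⟨by rintro rfl; exact hnadj (G.adj_symm hz.2), by rintro rfl; exact G.irrefl hz.2⟩
  simp only [Bool.decide_or, colorTwoBlock, List.append_assoc, List.cons_append,
    List.filter_append, lt_self_iff_false, and_false, not_false_eq_true,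
    filter_vertexList_of_not_right, decide_true, Bool.or_true, List.filter_cons_of_pos, hN,
    List.nil_append]
  exact ((List.prefix_append [y, y] _).isInfix.trans (List.suffix_append _ _).isInfix).trans
    (List.suffix_append _ _).isInfix

theorem colorTwoBlock_mem_blocks {d : V} (hd : C d = 2) : colorTwoBlock C d ∈ blocks C :=
  List.mem_append_left _ (List.mem_append_left _
    (List.mem_map_of_mem ((mem_colorTwoOrder C).2 hd)))

theorem colorOneBlock_mem_blocks {b : V} (hb : C b = 1) : colorOneBlock C b ∈ blocks C :=
  List.mem_append_left _ (List.mem_append_right _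
    (List.mem_map_of_mem (by simpa [colorClass] using hb)))

theorem alternate_word_iff :
    Alternate (word C) x y ↔
      ((blocks C).map (List.filter (fun z => z = x ∨ z = y))).flatten.IsChain (· ≠ ·) := by
  rw [Alternate, word, List.filter_flatten]
  rfl

theorem forall_mem_map_filter_blocks_of_zero_one (hx : C x = 0) (hy : C y = 1) :
    ∀ l ∈ (blocks C).map (List.filter (fun z => z = x ∨ z = y)),
      l = [x, y] ∨ (l = [y, x] ∧ ¬ G.Adj x y) := by
  have hlt : C x < C y := by omega
  simp only [blocks, List.map_append, List.map_map, List.mem_append, List.mem_map,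
    Function.comp, List.map_cons, List.map_nil, List.mem_cons, List.not_mem_nil, or_false]
  rintro l ((⟨d, hd, rfl⟩ | ⟨b, hb, rfl⟩) | rfl | rfl)
  · exact Or.inl (filter_colorTwoBlock_of_zero_one hx hy ((mem_colorTwoOrder C).1 hd))
  · rw [filter_colorOneBlock_of_lt hlt (by simpa [colorClass] using hb)]
    split_ifs with h
    exacts [Or.inr ⟨rfl, h.2⟩, Or.inl rfl]
  · exact Or.inl (filter_classBlock_of_lt hlt)
  · exact Or.inl (filter_reversedClassBlock_of_lt hlt)

theorem adj_iff_alternate_of_zero_one (hx : C x = 0) (hy : C y = 1) :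
    G.Adj x y ↔ Alternate (word C) x y := by
  have hxy : x ≠ y := by rintro rfl; simp_all
  have hL := forall_mem_map_filter_blocks_of_zero_one hx hy
  rw [alternate_word_iff]
  constructor
  · intro hadj
    rw [List.eq_replicate_of_mem fun l hl => (hL l hl).resolve_right (fun h => h.2 hadj)]
    exact List.isChain_ne_flatten_replicate hxy _
  · intro hchain
    by_contra hadj
    have hyx : [y, x] ∈ (blocks C).map (List.filter (fun z => z = x ∨ z = y)) := by
      refine List.mem_map.2 ⟨colorOneBlock C y, colorOneBlock_mem_blocks hy, ?_⟩
      rw [filter_colorOneBlock_of_lt (by omega) hy]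
      simp [hadj]
    have hxy' : [x, y] ∈ (blocks C).map (List.filter (fun z => z = x ∨ z = y)) :=
      List.mem_map.2 ⟨classBlock C, by simp [blocks], filter_classBlock_of_lt (by omega)⟩
    have := List.eq_of_isChain_ne_flatten (fun l hl => (hL l hl).imp_right And.left) hchain
      _ hyx _ hxy'
    exact hxy (List.cons.inj this).1.symm

theorem alternate_of_adj_of_color_two (hx : C x ≠ 2) (hy : C y = 2) (hadj : G.Adj x y) :
    Alternate (word C) x y := by
  have hxy : x ≠ y := G.ne_of_adj hadj
  obtain ⟨s, t, hs⟩ := List.exists_map_eq_replicate_append_cons_replicate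
    (pairwise_rank_colorTwoOrder C) ((mem_colorTwoOrder C).2 hy)
    (f := List.filter (fun z => z = x ∨ z = y) ∘ colorTwoBlock C)
    (fun d hd => filter_colorTwoBlock_of_rank_lt hx hy ((mem_colorTwoOrder C).1 hd))
    (fun d hd => filter_colorTwoBlock_of_rank_gt hx hy ((mem_colorTwoOrder C).1 hd))
  have hrest : ∀ l ∈ ((colorClass C 1).map (colorOneBlock C) ++
      [classBlock C, reversedClassBlock C]).map (List.filter (fun z => z = x ∨ z = y)),
      l = [x, y] := by
    have hlt : C x < C y := by omega
    simp only [List.map_append, List.map_map, List.mem_append, List.mem_map, Function.comp,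
      List.map_cons, List.map_nil, List.mem_cons, List.not_mem_nil, or_false]
    rintro l (⟨b, hb, rfl⟩ | rfl | rfl)
    · rw [filter_colorOneBlock_of_lt hlt (by simpa [colorClass] using hb)]
      simp [show b ≠ y by rintro rfl; simp_all [colorClass]]
    · exact filter_classBlock_of_lt hlt
    · exact filter_reversedClassBlock_of_lt hlt
  rw [alternate_word_iff, blocks, List.append_assoc, List.map_append, List.map_map, hs,
    Function.comp_apply, filter_colorTwoBlock_self hx hy hadj, List.eq_replicate_of_mem hrest,
    List.append_assoc, List.cons_append, ← List.replicate_add,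
    List.flatten_replicate_append_cons_replicate]
  exact List.isChain_ne_cons_flatten_replicate hxy.symm _

theorem not_alternate_of_not_adj_of_color_two (hy : C y = 2) (hnadj : ¬ G.Adj x y) :
    ¬ Alternate (word C) x y := by
  intro h
  have := h.infix ((infix_filter_colorTwoBlock_self hnadj).trans
    ((List.infix_of_mem_flatten (colorTwoBlock_mem_blocks hy)).filter _))
  simp at this

theorem not_alternate_of_color_eq (h : C x = C y) (hy : C y ≠ 2) :
    ¬ Alternate (word C) x y := by
  rw [alternate_word_iff, blocks, List.map_append, List.flatten_append, List.map_cons,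
    List.map_cons, List.map_nil, filter_reversedClassBlock_of_eq h hy]
  simp only [List.flatten_cons, List.flatten_nil, List.append_nil, ← List.append_assoc]
  exact List.not_isChain_ne_append_append_reverse
    (List.ne_nil_of_mem (List.mem_filter_of_mem (mem_classBlock C x) (by simp)))

variable (C) in
theorem adj_iff_alternate_word (x y : V) : G.Adj x y ↔ Alternate (word C) x y := by
  wlog hle : C x ≤ C y generalizing x y
  · rw [G.adj_comm, alternate_comm]
    exact this y x (le_of_not_ge hle)
  by_cases hy : C y = 2
  · by_cases hadj : G.Adj x y
    · exact iff_of_true hadj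
        (alternate_of_adj_of_color_two (fun hx => C.valid hadj (hx.trans hy.symm)) hy hadj)
    · exact iff_of_false hadj (not_alternate_of_not_adj_of_color_two hy hadj)
  by_cases hxy : C x = C y
  · exact iff_of_false (fun hadj => C.valid hadj hxy) (not_alternate_of_color_eq hxy hy)
  · obtain ⟨hx, hy⟩ : C x = 0 ∧ C y = 1 := by omega
    exact adj_iff_alternate_of_zero_one hx hy

variable (C) in
theorem represents_word : Represents (word C) G :=
  ⟨fun v => List.mem_flatten.2 ⟨classBlock C, by simp [blocks], mem_classBlock C v⟩,
    fun x y _ => adj_iff_alternate_word C x y⟩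

end ThreeColoring

/-- Every 3-colorable graph is word-representable: given a proper
3-coloring, orienting every edge from the lower color class to the higher one yields a
semi-transitive orientation. -/
theorem stmt_7 {V : Type*} [Fintype V] [DecidableEq V] (G : SimpleGraph V)
    (C : G.Coloring (Fin 3)) :
    (IsOrientation G (fun x y => G.Adj x y ∧ C x < C y) ∧
      SemiTransitive (fun x y => G.Adj x y ∧ C x < C y)) ∧
    WordRepresentable G := by
  classical
  exact ⟨⟨isOrientation_coloring C, semiTransitive_of_lt_grading C fun _ _ h => h.2⟩,
    ThreeColoring.word C, ThreeColoring.represents_word C⟩
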